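/- Let d ≥ 1 and let f : ℝ^d → ℝ be twice continuously differentiable with ‖∇²f(x)‖ ≤ B for all x, where B ≥ 0. Fix x ∈ ℝ^d and δ > 0, let u be distributed with the unit-scale truncated Cauchy density h, and let η be a real random variable with E[η | u] = 0 and E|η| < ∞. Define the gradient estimator G = ((f(x + δu) − f(x) + η)/δ) · (d+1)u/(1+‖u‖²). Then there exists w ∈ ℝ^d with ‖w‖ ≤ (d+1)B/2 such that E[G] = c₂·∇f(x) + δ·w, where c₂ = E_u[(d+1)u₁²/(1+‖u‖²)]. -/

import Mathlib

open MeasureTheory Real Filter Topology ProbabilityTheory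

/-- The truncated (to the `δ`-sphere) Cauchy density on `ℝ^d`, with normalizing
constant `c₁`: `h_δ(u) = Γ((d+1)/2)/(π^((d+1)/2) c₁ δ^d) · (1+‖u‖²/δ²)^(-(d+1)/2)`
for `‖u‖ ≤ δ` and `0` otherwise. -/
noncomputable def truncCauchy (d : ℕ) (c₁ δ : ℝ) (u : EuclideanSpace ℝ (Fin d)) : ℝ :=
  if ‖u‖ ≤ δ then
    Real.Gamma (((d : ℝ) + 1) / 2) / (Real.pi ^ (((d : ℝ) + 1) / 2) * c₁ * δ ^ d) *
      (1 + ‖u‖ ^ 2 / δ ^ 2) ^ (-(((d : ℝ) + 1) / 2))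
  else 0

/-- The unit-scale truncated Cauchy probability measure on `ℝ^d`. -/
noncomputable def truncCauchyMeasure (d : ℕ) (c₁ : ℝ) : Measure (EuclideanSpace ℝ (Fin d)) :=
  volume.withDensity fun v => ENNReal.ofReal (truncCauchy d c₁ 1 v)


/-! With `s(v) = (d+1)/(1+‖v‖²) • v` we have `G = ((f(x+δu) - f x)/δ) • s(u) + δ⁻¹ η • s(u)`.
The noise term has mean zero because `s(u)` is bounded and `σ(u)`-measurable while
`E[η | u] = 0`. By Taylor's formula `(f(x+δv) - f x)/δ = ⟪∇f(x), v⟫ + δ R(v)` with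
`|R(v)| ≤ B‖v‖²`. The density of `u` is radial, so its law is invariant under linear isometries:
reflecting one coordinate kills the moments `E[k(‖u‖) uᵢ uⱼ]`, `i ≠ j`, and swapping two
coordinates equalizes the diagonal ones, whence `E[⟪∇f(x), u⟫ • s(u)] = c₂ • ∇f(x)`. Finally
`‖u‖ ≤ 1` almost surely, so `‖R(u) • s(u)‖ ≤ B (d+1)‖u‖³/(1+‖u‖²) ≤ (d+1)B/2`. -/

open scoped InnerProductSpace

theorem norm_add_sub_sub_fderiv_le {E F : Type*} [NormedAddCommGroup E] [NormedSpace ℝ E]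
    [NormedAddCommGroup F] [NormedSpace ℝ F] {f : E → F} {B : ℝ} (hf : ContDiff ℝ 2 f)
    (hB : ∀ y, ‖iteratedFDeriv ℝ 2 f y‖ ≤ B) (x h : E) :
    ‖f (x + h) - f x - fderiv ℝ f x h‖ ≤ B * ‖h‖ ^ 2 := by
  have hf' : Differentiable ℝ (fderiv ℝ f) :=
    (hf.fderiv_right (m := 1) (by norm_num)).differentiable one_ne_zero
  have hlip : ∀ z, ‖fderiv ℝ f z - fderiv ℝ f x‖ ≤ B * ‖z - x‖ := fun z =>
    convex_univ.norm_image_sub_le_of_norm_fderiv_le (fun w _ => hf' w)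
      (fun w _ => by rw [← norm_iteratedFDeriv_one, norm_iteratedFDeriv_fderiv]; exact hB w)
      (Set.mem_univ x) (Set.mem_univ z)
  have hB0 : 0 ≤ B := (norm_nonneg _).trans (hB x)
  have key := (convex_closedBall x ‖h‖).norm_image_sub_le_of_norm_fderiv_le'
    (fun z _ => (hf.differentiable two_ne_zero) z)
    (fun z hz => (hlip z).trans (mul_le_mul_of_nonneg_left (mem_closedBall_iff_norm.mp hz) hB0))
    (Metric.mem_closedBall_self (norm_nonneg h)) (y := x + h) (by simp)
  simpa [pow_two, mul_assoc] using key

theorem MeasureTheory.MeasurePreserving.withDensity_of_comp_eq {α : Type*} [MeasurableSpace α]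
    {μ : Measure α} {e : α ≃ᵐ α} (he : MeasurePreserving e μ μ) {ρ : α → ENNReal}
    (hρ : ∀ a, ρ (e a) = ρ a) :
    MeasurePreserving e (μ.withDensity ρ) (μ.withDensity ρ) := by
  refine ⟨e.measurable, Measure.ext fun s hs => ?_⟩
  rw [Measure.map_apply e.measurable hs, withDensity_apply _ (e.measurable hs),
    withDensity_apply _ hs]
  simpa only [hρ] using he.setLIntegral_comp_preimage_emb e.measurableEmbedding ρ s

def IsIsometryInvariant {d : ℕ} (μ : Measure (EuclideanSpace ℝ (Fin d))) : Prop :=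
  ∀ T : EuclideanSpace ℝ (Fin d) ≃ₗᵢ[ℝ] EuclideanSpace ℝ (Fin d), MeasurePreserving T μ μ

section TruncCauchy

variable {d : ℕ} {c₁ : ℝ}

theorem truncCauchy_nonneg (hc₁ : 0 < c₁) {δ : ℝ} (hδ : 0 < δ) (v : EuclideanSpace ℝ (Fin d)) :
    0 ≤ truncCauchy d c₁ δ v := by
  unfold truncCauchy
  split_ifs
  · have := Real.Gamma_pos_of_pos (by positivity : (0 : ℝ) < ((d : ℝ) + 1) / 2)
    positivity
  · exact le_rfl

theorem measurable_truncCauchy (δ : ℝ) : Measurable (truncCauchy d c₁ δ) := by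
  refine Measurable.ite (measurableSet_le (by fun_prop) measurable_const) ?_ measurable_const
  refine Continuous.measurable (continuous_const.mul (Continuous.rpow_const ?_ fun v => ?_))
  · fun_prop
  · left; positivity

theorem truncCauchy_linearIsometryEquiv_apply (δ : ℝ)
    (T : EuclideanSpace ℝ (Fin d) ≃ₗᵢ[ℝ] EuclideanSpace ℝ (Fin d)) (v : EuclideanSpace ℝ (Fin d)) :
    truncCauchy d c₁ δ (T v) = truncCauchy d c₁ δ v := by
  simp only [truncCauchy, T.norm_map]

theorem isIsometryInvariant_truncCauchyMeasure :
    IsIsometryInvariant (truncCauchyMeasure d c₁) := fun T =>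
  T.measurePreserving.withDensity_of_comp_eq (e := T.toHomeomorph.toMeasurableEquiv) fun v => by
    simp only [Homeomorph.toMeasurableEquiv_coe, LinearIsometryEquiv.coe_toHomeomorph,
      truncCauchy_linearIsometryEquiv_apply]

theorem ae_norm_le_one_truncCauchyMeasure :
    ∀ᵐ v ∂(truncCauchyMeasure d c₁), ‖v‖ ≤ 1 := by
  refine (ae_withDensity_iff (measurable_truncCauchy 1).ennreal_ofReal).mpr
    (ae_of_all _ fun v hv => ?_)
  by_contra hv1
  simp [truncCauchy, hv1] at hv

theorem integral_truncCauchy_mul (hc₁ : 0 < c₁) (g : EuclideanSpace ℝ (Fin d) → ℝ) :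
    ∫ v, truncCauchy d c₁ 1 v * g v = ∫ v, g v ∂(truncCauchyMeasure d c₁) := by
  rw [truncCauchyMeasure, integral_withDensity_eq_integral_toReal_smul
    (measurable_truncCauchy 1).ennreal_ofReal (ae_of_all _ fun _ => ENNReal.ofReal_lt_top)]
  congr 1 with v
  rw [ENNReal.toReal_ofReal (truncCauchy_nonneg hc₁ one_pos v), smul_eq_mul]

end TruncCauchy

section IsometryInvariant

variable {d : ℕ} {μ : Measure (EuclideanSpace ℝ (Fin d))}

theorem EuclideanSpace.integral_apply {F : EuclideanSpace ℝ (Fin d) → EuclideanSpace ℝ (Fin d)}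
    (hF : Integrable F μ) (i : Fin d) : (∫ v, F v ∂μ) i = ∫ v, F v i ∂μ := by
  simpa using ((EuclideanSpace.proj (𝕜 := ℝ) i).integral_comp_comm hF).symm

theorem integral_radial_mul_coord_mul_coord_of_ne (hμ : IsIsometryInvariant μ) (k : ℝ → ℝ)
    {i j : Fin d} (hij : i ≠ j) :
    ∫ v, k ‖v‖ * (v i * v j) ∂μ = 0 := by
  classical
  let T : EuclideanSpace ℝ (Fin d) ≃ₗᵢ[ℝ] EuclideanSpace ℝ (Fin d) :=
    LinearIsometryEquiv.piLpCongrRight 2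
      fun l => if l = j then LinearIsometryEquiv.neg ℝ else LinearIsometryEquiv.refl ℝ ℝ
  have hT : ∀ v l, T v l = if l = j then -v l else v l := fun v l => by
    by_cases h : l = j <;> simp [T, h]
  have hodd : ∀ v, k ‖T v‖ * (T v i * T v j) = -(k ‖v‖ * (v i * v j)) := fun v => by
    rw [T.norm_map, hT, hT, if_neg hij, if_pos rfl]
    ring
  have key := (hμ T).integral_comp T.toHomeomorph.measurableEmbedding
    fun v => k ‖v‖ * (v i * v j)
  simp only [hodd, integral_neg] at key
  linarith

theorem integral_radial_mul_coord_sq_eq (hμ : IsIsometryInvariant μ) (k : ℝ → ℝ) (i j : Fin d) :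
    ∫ v, k ‖v‖ * v i ^ 2 ∂μ = ∫ v, k ‖v‖ * v j ^ 2 ∂μ := by
  let T : EuclideanSpace ℝ (Fin d) ≃ₗᵢ[ℝ] EuclideanSpace ℝ (Fin d) :=
    LinearIsometryEquiv.piLpCongrLeft 2 ℝ ℝ (Equiv.swap i j)
  have hswap : ∀ v, k ‖T v‖ * T v i ^ 2 = k ‖v‖ * v j ^ 2 := fun v => by
    rw [T.norm_map]
    simp [T, LinearIsometryEquiv.piLpCongrLeft_apply, Equiv.swap_apply_left]
  rw [← (hμ T).integral_comp T.toHomeomorph.measurableEmbedding]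
  simp only [hswap]

theorem integrable_radial_mul_coord_mul_coord {k : ℝ → ℝ} (hk : Measurable k)
    (hint : Integrable (fun v => k ‖v‖ * ‖v‖ ^ 2) μ) (i j : Fin d) :
    Integrable (fun v => k ‖v‖ * (v i * v j)) μ := by
  refine hint.mono (by fun_prop) (ae_of_all _ fun v => ?_)
  rw [norm_mul, norm_mul, norm_mul, norm_pow, norm_norm, pow_two]
  gcongr <;> exact PiLp.norm_apply_le v _

theorem integrable_inner_smul_radial_smul {k : ℝ → ℝ} (hk : Measurable k)
    (hint : Integrable (fun v => k ‖v‖ * ‖v‖ ^ 2) μ) (g : EuclideanSpace ℝ (Fin d)) :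
    Integrable (fun v => ⟪g, v⟫_ℝ • k ‖v‖ • v) μ := by
  refine (hint.const_mul ‖g‖).mono (by fun_prop) (ae_of_all _ fun v => ?_)
  rw [norm_smul, norm_smul, norm_mul, norm_mul, norm_pow, norm_norm, norm_norm]
  calc ‖⟪g, v⟫_ℝ‖ * (‖k ‖v‖‖ * ‖v‖) ≤ ‖g‖ * ‖v‖ * (‖k ‖v‖‖ * ‖v‖) := by
        gcongr; exact norm_inner_le_norm g v
    _ = ‖g‖ * (‖k ‖v‖‖ * ‖v‖ ^ 2) := by ring

theorem integral_inner_smul_radial_smul (hμ : IsIsometryInvariant μ) {k : ℝ → ℝ}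
    (hk : Measurable k) (hint : Integrable (fun v => k ‖v‖ * ‖v‖ ^ 2) μ)
    (g : EuclideanSpace ℝ (Fin d)) (i₀ : Fin d) :
    ∫ v, ⟪g, v⟫_ℝ • k ‖v‖ • v ∂μ = (∫ v, k ‖v‖ * v i₀ ^ 2 ∂μ) • g := by
  have hcoord : ∀ v i, (⟪g, v⟫_ℝ • k ‖v‖ • v) i = ∑ j, g j * (k ‖v‖ * (v j * v i)) := by
    intro v i
    simp only [PiLp.smul_apply, smul_eq_mul, EuclideanSpace.inner_eq_star_dotProduct,
      dotProduct, Finset.sum_mul, star_trivial]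
    exact Finset.sum_congr rfl fun j _ => by ring
  ext i
  rw [EuclideanSpace.integral_apply (integrable_inner_smul_radial_smul hk hint g),
    PiLp.smul_apply, smul_eq_mul]
  simp only [hcoord]
  rw [integral_finsetSum _ fun j _ =>
      (integrable_radial_mul_coord_mul_coord hk hint j i).const_mul _,
    Finset.sum_eq_single i]
  · rw [integral_const_mul, mul_comm, integral_radial_mul_coord_sq_eq hμ k i₀ i]
    simp only [pow_two]
  · intro j _ hji
    rw [integral_const_mul, integral_radial_mul_coord_mul_coord_of_ne hμ k hji, mul_zero]
  · simp

end IsometryInvariant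

theorem integral_smul_comp_eq_zero_of_condExp_eq_zero {Ω α F : Type*} {mΩ : MeasurableSpace Ω}
    {P : Measure Ω} [IsFiniteMeasure P] [MeasurableSpace α] [NormedAddCommGroup F]
    [NormedSpace ℝ F] [CompleteSpace F] {u : Ω → α} (hu : Measurable u) {η : Ω → ℝ}
    (hη : Integrable η P) (hη₀ : P[η | MeasurableSpace.comap u inferInstance] =ᵐ[P] 0)
    {Ψ : α → F} (hΨ : StronglyMeasurable Ψ) {C : ℝ} (hC : ∀ a, ‖Ψ a‖ ≤ C) :
    ∫ ω, η ω • Ψ (u ω) ∂P = 0 := by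
  have hΨu : StronglyMeasurable[MeasurableSpace.comap u inferInstance] (Ψ ∘ u) :=
    hΨ.comp_measurable (Measurable.of_comap_le le_rfl)
  have hηΨ : Integrable (η • (Ψ ∘ u)) P :=
    hη.smul_bdd C (hΨu.mono hu.comap_le).aestronglyMeasurable (ae_of_all _ fun ω => hC (u ω))
  calc ∫ ω, η ω • Ψ (u ω) ∂P
      = ∫ ω, P[η • (Ψ ∘ u) | MeasurableSpace.comap u inferInstance] ω ∂P :=
        (integral_condExp hu.comap_le).symm
    _ = ∫ ω, (0 : F) ∂P := integral_congr_ae <|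
        (condExp_smul_of_aestronglyMeasurable_right hη hηΨ hΨu.aestronglyMeasurable).trans <|
          hη₀.mono fun ω hω => by simp [hω]
    _ = 0 := integral_zero _ _

section CauchyWeight

noncomputable def cauchyWeight (d : ℕ) (r : ℝ) : ℝ := ((d : ℝ) + 1) / (1 + r ^ 2)

variable {d : ℕ}

@[fun_prop]
theorem continuous_cauchyWeight : Continuous (cauchyWeight d) :=
  continuous_const.div (by fun_prop) fun r => by positivity

theorem cauchyWeight_nonneg (r : ℝ) : 0 ≤ cauchyWeight d r := by
  unfold cauchyWeight; positivity

theorem cauchyWeight_mul_le (r : ℝ) : cauchyWeight d r * r ≤ ((d : ℝ) + 1) / 2 := by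
  rw [cauchyWeight, div_mul_eq_mul_div, div_le_div_iff₀ (by positivity) two_pos]
  nlinarith [sq_nonneg (r - 1), (by positivity : (0 : ℝ) ≤ d)]

theorem cauchyWeight_mul_sq_le (r : ℝ) : cauchyWeight d r * r ^ 2 ≤ (d : ℝ) + 1 := by
  rw [cauchyWeight, div_mul_eq_mul_div, div_le_iff₀ (by positivity)]
  nlinarith [sq_nonneg r, (by positivity : (0 : ℝ) ≤ d)]

theorem cauchyWeight_mul_pow_three_le {r : ℝ} (hr₀ : 0 ≤ r) (hr₁ : r ≤ 1) :
    cauchyWeight d r * r ^ 3 ≤ ((d : ℝ) + 1) / 2 := by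
  rw [cauchyWeight, div_mul_eq_mul_div, div_le_div_iff₀ (by positivity) two_pos]
  have : 2 * r ^ 3 ≤ 1 + r ^ 2 := by nlinarith [mul_le_mul_of_nonneg_left hr₁ (sq_nonneg r)]
  nlinarith [(by positivity : (0 : ℝ) ≤ d)]

theorem norm_cauchyWeight_smul {E : Type*} [NormedAddCommGroup E] [NormedSpace ℝ E] (v : E) :
    ‖cauchyWeight d ‖v‖ • v‖ = cauchyWeight d ‖v‖ * ‖v‖ := by
  rw [norm_smul, Real.norm_of_nonneg (cauchyWeight_nonneg _)]

theorem norm_cauchyWeight_smul_le {E : Type*} [NormedAddCommGroup E] [NormedSpace ℝ E] (v : E) :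
    ‖cauchyWeight d ‖v‖ • v‖ ≤ ((d : ℝ) + 1) / 2 :=
  (norm_cauchyWeight_smul v).trans_le (cauchyWeight_mul_le _)

theorem integrable_cauchyWeight_mul_sq {E : Type*} [NormedAddCommGroup E] [MeasurableSpace E]
    [OpensMeasurableSpace E] {μ : Measure E} [IsFiniteMeasure μ] :
    Integrable (fun v => cauchyWeight d ‖v‖ * ‖v‖ ^ 2) μ :=
  .of_bound (by fun_prop) _ (ae_of_all _ fun v => by
    rw [Real.norm_of_nonneg (mul_nonneg (cauchyWeight_nonneg _) (sq_nonneg _))]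
    exact cauchyWeight_mul_sq_le _)

end CauchyWeight

section Remainder

variable {E : Type*} [NormedAddCommGroup E] [InnerProductSpace ℝ E] [CompleteSpace E]

noncomputable def secondOrderRemainder (f : E → ℝ) (x : E) (δ : ℝ) (v : E) : ℝ :=
  (f (x + δ • v) - f x - δ * ⟪gradient f x, v⟫_ℝ) / δ ^ 2

theorem continuous_secondOrderRemainder {f : E → ℝ} (hf : Continuous f) (x : E) (δ : ℝ) :
    Continuous (secondOrderRemainder f x δ) := by
  unfold secondOrderRemainder; fun_prop

theorem abs_secondOrderRemainder_le {f : E → ℝ} {B : ℝ} (hf : ContDiff ℝ 2 f)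
    (hB : ∀ y, ‖iteratedFDeriv ℝ 2 f y‖ ≤ B) (x : E) {δ : ℝ} (hδ : δ ≠ 0) (v : E) :
    |secondOrderRemainder f x δ v| ≤ B * ‖v‖ ^ 2 := by
  have key := norm_add_sub_sub_fderiv_le hf hB x (δ • v)
  rw [map_smul, smul_eq_mul, ← inner_gradient_left, norm_smul, mul_pow, Real.norm_eq_abs,
    Real.norm_eq_abs, sq_abs] at key
  have hδ2 : 0 < δ ^ 2 := sq_pos_of_ne_zero hδ
  rw [secondOrderRemainder, abs_div, abs_of_pos hδ2, div_le_iff₀ hδ2]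
  linarith

theorem sub_div_eq_inner_gradient_add_secondOrderRemainder (f : E → ℝ) (x : E) {δ : ℝ}
    (hδ : δ ≠ 0) (v : E) :
    (f (x + δ • v) - f x) / δ = ⟪gradient f x, v⟫_ℝ + δ * secondOrderRemainder f x δ v := by
  rw [secondOrderRemainder]
  field_simp
  ring

theorem norm_secondOrderRemainder_smul_cauchyWeight_smul_le {f : E → ℝ} {B : ℝ}
    (hf : ContDiff ℝ 2 f) (hB : ∀ y, ‖iteratedFDeriv ℝ 2 f y‖ ≤ B) (x : E) {δ : ℝ} (hδ : δ ≠ 0)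
    (d : ℕ) {v : E} (hv : ‖v‖ ≤ 1) :
    ‖secondOrderRemainder f x δ v • cauchyWeight d ‖v‖ • v‖ ≤ ((d : ℝ) + 1) * B / 2 := by
  have hB₀ : 0 ≤ B := (norm_nonneg _).trans (hB x)
  rw [norm_smul, norm_cauchyWeight_smul, Real.norm_eq_abs]
  calc |secondOrderRemainder f x δ v| * (cauchyWeight d ‖v‖ * ‖v‖)
      ≤ B * ‖v‖ ^ 2 * (cauchyWeight d ‖v‖ * ‖v‖) := by
        gcongr
        · exact mul_nonneg (cauchyWeight_nonneg _) (norm_nonneg v)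
        · exact abs_secondOrderRemainder_le hf hB x hδ v
    _ = B * (cauchyWeight d ‖v‖ * ‖v‖ ^ 3) := by ring
    _ ≤ B * (((d : ℝ) + 1) / 2) := by
        gcongr; exact cauchyWeight_mul_pow_three_le (norm_nonneg v) hv
    _ = ((d : ℝ) + 1) * B / 2 := by ring

end Remainder

section DifferenceQuotient

variable {d : ℕ} {μ : Measure (EuclideanSpace ℝ (Fin d))} {f : EuclideanSpace ℝ (Fin d) → ℝ}
  {B δ : ℝ}

theorem integrable_secondOrderRemainder_smul_cauchyWeight_smul [IsFiniteMeasure μ]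
    (hμ₁ : ∀ᵐ v ∂μ, ‖v‖ ≤ 1) (hf : ContDiff ℝ 2 f) (hB : ∀ y, ‖iteratedFDeriv ℝ 2 f y‖ ≤ B)
    (x : EuclideanSpace ℝ (Fin d)) (hδ : δ ≠ 0) :
    Integrable (fun v => secondOrderRemainder f x δ v • cauchyWeight d ‖v‖ • v) μ :=
  .of_bound (by have := continuous_secondOrderRemainder hf.continuous x δ; fun_prop) _
    (hμ₁.mono fun _ hv => norm_secondOrderRemainder_smul_cauchyWeight_smul_le hf hB x hδ d hv)

theorem norm_integral_secondOrderRemainder_smul_cauchyWeight_smul_le [IsProbabilityMeasure μ]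
    (hμ₁ : ∀ᵐ v ∂μ, ‖v‖ ≤ 1) (hf : ContDiff ℝ 2 f) (hB : ∀ y, ‖iteratedFDeriv ℝ 2 f y‖ ≤ B)
    (x : EuclideanSpace ℝ (Fin d)) (hδ : δ ≠ 0) :
    ‖∫ v, secondOrderRemainder f x δ v • cauchyWeight d ‖v‖ • v ∂μ‖ ≤ ((d : ℝ) + 1) * B / 2 := by
  simpa using norm_integral_le_of_norm_le_const
    (hμ₁.mono fun _ hv => norm_secondOrderRemainder_smul_cauchyWeight_smul_le hf hB x hδ d hv)

theorem differenceQuotient_smul_eq (f : EuclideanSpace ℝ (Fin d) → ℝ) (x : EuclideanSpace ℝ (Fin d))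
    (hδ : δ ≠ 0) (v w : EuclideanSpace ℝ (Fin d)) :
    ((f (x + δ • v) - f x) / δ) • w =
      ⟪gradient f x, v⟫_ℝ • w + δ • secondOrderRemainder f x δ v • w := by
  rw [sub_div_eq_inner_gradient_add_secondOrderRemainder f x hδ, add_smul, mul_smul]

theorem integrable_differenceQuotient_smul_cauchyWeight_smul [IsFiniteMeasure μ]
    (hμ₁ : ∀ᵐ v ∂μ, ‖v‖ ≤ 1) (hf : ContDiff ℝ 2 f) (hB : ∀ y, ‖iteratedFDeriv ℝ 2 f y‖ ≤ B)
    (x : EuclideanSpace ℝ (Fin d)) (hδ : δ ≠ 0) :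
    Integrable (fun v => ((f (x + δ • v) - f x) / δ) • cauchyWeight d ‖v‖ • v) μ := by
  simp only [differenceQuotient_smul_eq f x hδ]
  exact (integrable_inner_smul_radial_smul (by fun_prop) integrable_cauchyWeight_mul_sq _).add
    ((integrable_secondOrderRemainder_smul_cauchyWeight_smul hμ₁ hf hB x hδ).fun_smul δ)

theorem integral_differenceQuotient_smul_cauchyWeight_smul [IsFiniteMeasure μ]
    (hμ : IsIsometryInvariant μ) (hμ₁ : ∀ᵐ v ∂μ, ‖v‖ ≤ 1) (hf : ContDiff ℝ 2 f)
    (hB : ∀ y, ‖iteratedFDeriv ℝ 2 f y‖ ≤ B) (x : EuclideanSpace ℝ (Fin d)) (hδ : δ ≠ 0)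
    (i₀ : Fin d) :
    ∫ v, ((f (x + δ • v) - f x) / δ) • cauchyWeight d ‖v‖ • v ∂μ =
      (∫ v, cauchyWeight d ‖v‖ * v i₀ ^ 2 ∂μ) • gradient f x +
        δ • ∫ v, secondOrderRemainder f x δ v • cauchyWeight d ‖v‖ • v ∂μ := by
  simp only [differenceQuotient_smul_eq f x hδ]
  rw [integral_add
      (integrable_inner_smul_radial_smul (by fun_prop) integrable_cauchyWeight_mul_sq _)
      ((integrable_secondOrderRemainder_smul_cauchyWeight_smul hμ₁ hf hB x hδ).fun_smul δ),
    integral_smul, integral_inner_smul_radial_smul hμ (by fun_prop) integrable_cauchyWeight_mul_sq]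

end DifferenceQuotient

theorem gradient_estimator_bias_general
    {Ω : Type*} {mΩ : MeasurableSpace Ω} (P : Measure Ω) [IsProbabilityMeasure P]
    (d : ℕ) (hd : 0 < d) (c₁ : ℝ) (hc₁ : 0 < c₁)
    (f : EuclideanSpace ℝ (Fin d) → ℝ) (B : ℝ)
    (hf : ContDiff ℝ 2 f)
    (hHess : ∀ y : EuclideanSpace ℝ (Fin d), ‖iteratedFDeriv ℝ 2 f y‖ ≤ B)
    (x : EuclideanSpace ℝ (Fin d)) (δ : ℝ) (hδ : 0 < δ)
    (u : Ω → EuclideanSpace ℝ (Fin d)) (hu_meas : Measurable u)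
    (hu_law : Measure.map u P = truncCauchyMeasure d c₁)
    (η : Ω → ℝ) (hη_int : Integrable η P)
    (hη_cond : P[η | MeasurableSpace.comap u inferInstance] =ᵐ[P] 0)
    (G : Ω → EuclideanSpace ℝ (Fin d))
    (hG : ∀ ω, G ω = ((f (x + δ • u ω) - f x + η ω) / δ *
        (((d : ℝ) + 1) / (1 + ‖u ω‖ ^ 2))) • u ω)
    (c₂ : ℝ)
    (hc₂ : c₂ = ∫ v : EuclideanSpace ℝ (Fin d),
      truncCauchy d c₁ 1 v * (((d : ℝ) + 1) * (v ⟨0, hd⟩) ^ 2 / (1 + ‖v‖ ^ 2))) :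
    ∃ w : EuclideanSpace ℝ (Fin d), ‖w‖ ≤ ((d : ℝ) + 1) * B / 2 ∧
      (∫ ω, G ω ∂P) = c₂ • gradient f x + δ • w := by
  set μ := truncCauchyMeasure d c₁
  have : IsProbabilityMeasure μ := hu_law ▸ Measure.isProbabilityMeasure_map hu_meas.aemeasurable
  set s : EuclideanSpace ℝ (Fin d) → EuclideanSpace ℝ (Fin d) := fun v => cauchyWeight d ‖v‖ • v
  set D := fun v => ((f (x + δ • v) - f x) / δ) • s v
  have hD : Integrable D μ := integrable_differenceQuotient_smul_cauchyWeight_smul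
    ae_norm_le_one_truncCauchyMeasure hf hHess x hδ.ne'
  have hs : Continuous s := by fun_prop
  have hnoise : Integrable (fun ω => η ω • s (u ω)) P := hη_int.smul_bdd _
    (hs.measurable.comp hu_meas).aestronglyMeasurable
    (ae_of_all _ fun ω => norm_cauchyWeight_smul_le (u ω))
  have hG' : ∀ ω, G ω = D (u ω) + δ⁻¹ • η ω • s (u ω) := fun ω => by
    rw [hG]
    simp only [D, s, cauchyWeight, smul_smul, ← add_smul]
    congr 1
    field_simp
  have hc₂' : c₂ = ∫ v, cauchyWeight d ‖v‖ * v ⟨0, hd⟩ ^ 2 ∂μ := by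
    rw [hc₂, integral_truncCauchy_mul hc₁]
    exact integral_congr_ae (ae_of_all _ fun v => by simp only [cauchyWeight]; ring)
  refine ⟨_, norm_integral_secondOrderRemainder_smul_cauchyWeight_smul_le
    (ae_norm_le_one_truncCauchyMeasure (c₁ := c₁)) hf hHess x hδ.ne', ?_⟩
  calc ∫ ω, G ω ∂P
      = ∫ v, D v ∂μ + δ⁻¹ • ∫ ω, η ω • s (u ω) ∂P := by
        rw [integral_congr_ae (ae_of_all _ hG'),
          integral_add ((hu_law ▸ hD).comp_measurable hu_meas) (hnoise.fun_smul _), integral_smul,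
          ← hu_law, integral_map hu_meas.aemeasurable (hu_law ▸ hD.aestronglyMeasurable)]
    _ = _ := by
        rw [integral_smul_comp_eq_zero_of_condExp_eq_zero hu_meas hη_int hη_cond
            hs.stronglyMeasurable norm_cauchyWeight_smul_le, smul_zero, add_zero,
          integral_differenceQuotient_smul_cauchyWeight_smul isIsometryInvariant_truncCauchyMeasure
            ae_norm_le_one_truncCauchyMeasure hf hHess x hδ.ne' ⟨0, hd⟩, hc₂']

/-- Bias characterization of the one-sided truncated-Cauchy gradient estimator
`G = ((f(x+δu) − f(x) + η)/δ)·(d+1)u/(1+‖u‖²)`: its expectation is `c₂∇f(x) + δw`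
with `‖w‖ ≤ (d+1)B/2`. -/
theorem gradient_estimator_bias
    {Ω : Type*} {mΩ : MeasurableSpace Ω} (P : Measure Ω) [IsProbabilityMeasure P]
    (d : ℕ) (hd : 0 < d) (c₁ : ℝ) (hc₁ : 0 < c₁)
    (f : EuclideanSpace ℝ (Fin d) → ℝ) (B : ℝ) (hB : 0 ≤ B)
    (hf : ContDiff ℝ 2 f)
    (hHess : ∀ y : EuclideanSpace ℝ (Fin d), ‖iteratedFDeriv ℝ 2 f y‖ ≤ B)
    (x : EuclideanSpace ℝ (Fin d)) (δ : ℝ) (hδ : 0 < δ)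
    (u : Ω → EuclideanSpace ℝ (Fin d)) (hu_meas : Measurable u)
    (hu_law : Measure.map u P = truncCauchyMeasure d c₁)
    (η : Ω → ℝ) (hη_int : Integrable η P)
    (hη_cond : P[η | MeasurableSpace.comap u inferInstance] =ᵐ[P] 0)
    (G : Ω → EuclideanSpace ℝ (Fin d))
    (hG : ∀ ω, G ω = ((f (x + δ • u ω) - f x + η ω) / δ *
        (((d : ℝ) + 1) / (1 + ‖u ω‖ ^ 2))) • u ω)
    (c₂ : ℝ)
    (hc₂ : c₂ = ∫ v : EuclideanSpace ℝ (Fin d),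
      truncCauchy d c₁ 1 v * (((d : ℝ) + 1) * (v ⟨0, hd⟩) ^ 2 / (1 + ‖v‖ ^ 2))) :
    ∃ w : EuclideanSpace ℝ (Fin d), ‖w‖ ≤ ((d : ℝ) + 1) * B / 2 ∧
      (∫ ω, G ω ∂P) = c₂ • gradient f x + δ • w :=
  gradient_estimator_bias_general (mΩ := mΩ) P d hd c₁ hc₁ f B hf hHess x δ hδ u hu_meas hu_law η
    hη_int hη_cond G hG c₂ hc₂
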